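/- arXiv:1805.11955 — 4 statements merged into one kernel-verified Lean document; each statement's English description precedes it below -/
import Mathlib

section
/- Let S be an inverse semigroup and let R be a system over S that is coherent, system simple, and left (or right) s-unital epsilon-strong. If C_R(Z(R_0)) ⊆ R_0, then R is a simple ring. -/
open Pointwise

namespace PaperSys

variable {S R : Type*} [Semigroup S] [NonUnitalRing R]

/-- The additive subgroup of finite sums of products `a * b` with `a ∈ A`, `b ∈ B`. -/
def sumProd (A B : AddSubgroup R) : AddSubgroup R :=
  AddSubgroup.closure ((A : Set R) * (B : Set R))

/-- `𝓡` is a system over the semigroup `S` on the ring `R`: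
`R = Σ_{s ∈ S} R_s` and `R_s R_t ⊆ R_{st}`. -/
def IsSystem (𝓡 : S → AddSubgroup R) : Prop :=
  (⨆ s : S, 𝓡 s) = (⊤ : AddSubgroup R) ∧
    ∀ s t : S, ∀ x ∈ 𝓡 s, ∀ y ∈ 𝓡 t, x * y ∈ 𝓡 (s * t)

/-- `R₀ = Σ_{e ∈ E(S)} R_e`. -/
def sysZero (𝓡 : S → AddSubgroup R) : AddSubgroup R :=
  ⨆ e ∈ {e : S | e * e = e}, 𝓡 e

/-- `I` is a two-sided ideal of the (possibly non-unital) ring `R`. -/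
def IsRingIdeal (I : AddSubgroup R) : Prop :=
  ∀ r : R, ∀ x ∈ I, r * x ∈ I ∧ x * r ∈ I

/-- `I` is a system ideal: an ideal with `I = Σ_{s ∈ S} (I ∩ R_s)`. -/
def IsSystemIdeal (𝓡 : S → AddSubgroup R) (I : AddSubgroup R) : Prop :=
  IsRingIdeal I ∧ I = ⨆ s : S, (I ⊓ 𝓡 s)

/-- `R` is system simple: `{0}` and `R` are the only system ideals. -/
def SystemSimple (𝓡 : S → AddSubgroup R) : Prop :=
  ∀ I : AddSubgroup R, IsSystemIdeal 𝓡 I → I = ⊥ ∨ I = ⊤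

/-- `R` is a simple ring: `{0}` and `R` are the only two-sided ideals. -/
def RingSimple (R' : Type*) [NonUnitalRing R'] : Prop :=
  ∀ I : AddSubgroup R', IsRingIdeal I → I = ⊥ ∨ I = ⊤

/-- `Z(R₀)` as a subset of `R`. -/
def centerZero (𝓡 : S → AddSubgroup R) : Set R :=
  {z : R | z ∈ sysZero 𝓡 ∧ ∀ y ∈ sysZero 𝓡, z * y = y * z}

/-- `C_R(Z(R₀))` as a subset of `R`. -/
def centCenterZero (𝓡 : S → AddSubgroup R) : Set R :=
  {x : R | ∀ z ∈ centerZero 𝓡, x * z = z * x}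

/-- The system is idempotent coherent: `R₀ R_s ⊆ R_s` and `R_s R₀ ⊆ R_s`. -/
def IdemCoherent (𝓡 : S → AddSubgroup R) : Prop :=
  ∀ s : S, (∀ x ∈ sysZero 𝓡, ∀ y ∈ 𝓡 s, x * y ∈ 𝓡 s) ∧
    (∀ x ∈ sysZero 𝓡, ∀ y ∈ 𝓡 s, y * x ∈ 𝓡 s)

/-- The system is left non-degenerate. -/
def LeftNonDeg (𝓡 : S → AddSubgroup R) : Prop :=
  ∀ e : S, e * e = e → ∀ r ∈ 𝓡 e, r ≠ 0 →
    ∃ t : S, (t * e) * (t * e) = t * e ∧ ∃ x ∈ 𝓡 t, x * r ≠ 0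

/-- The system is right non-degenerate. -/
def RightNonDeg (𝓡 : S → AddSubgroup R) : Prop :=
  ∀ e : S, e * e = e → ∀ r ∈ 𝓡 e, r ≠ 0 →
    ∃ t : S, (e * t) * (e * t) = e * t ∧ ∃ x ∈ 𝓡 t, r * x ≠ 0

/-- `star` makes the semigroup `S` an inverse semigroup: `s (s*) s = s`,
`(s*) s (s*) = s*`, and `s*` is the unique such element. -/
def IsInverseStar (star : S → S) : Prop :=
  (∀ s : S, s * star s * s = s) ∧ (∀ s : S, star s * s * star s = star s) ∧
    ∀ s t : S, s * t * s = s → t * s * t = t → t = star s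

/-- Coherent: `s ≤ t` (i.e. `s = t s* s`) implies `R_s ⊆ R_t`. -/
def Coherent (star : S → S) (𝓡 : S → AddSubgroup R) : Prop :=
  ∀ s t : S, s = t * star s * s → 𝓡 s ≤ 𝓡 t

/-- Left s-unital epsilon-strong. -/
def LeftSEps (star : S → S) (𝓡 : S → AddSubgroup R) : Prop :=
  ∀ s : S, ∀ r ∈ 𝓡 s, ∃ ε ∈ sumProd (𝓡 s) (𝓡 (star s)), ε * r = r

/-- Right s-unital epsilon-strong. -/
def RightSEps (star : S → S) (𝓡 : S → AddSubgroup R) : Prop :=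
  ∀ s : S, ∀ r ∈ 𝓡 s, ∃ ε ∈ sumProd (𝓡 (star s)) (𝓡 s), r * ε = r

/-- Symmetric: `R_s R_{s*} R_s = R_s` for all `s`. -/
def IsSymmetricSys (star : S → S) (𝓡 : S → AddSubgroup R) : Prop :=
  ∀ s : S, sumProd (sumProd (𝓡 s) (𝓡 (star s))) (𝓡 s) = 𝓡 s

/-- The ring extension `R / C_R(Z(R₀))` has the ideal intersection property. -/
def IIPCentCenterZero (𝓡 : S → AddSubgroup R) : Prop :=
  ∀ I : AddSubgroup R, IsRingIdeal I → I ≠ ⊥ →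
    ∃ x : R, x ≠ 0 ∧ x ∈ I ∧ x ∈ centCenterZero 𝓡

/-- `R₀` is a maximal commutative subring of `R`: `C_R(R₀) = R₀`. -/
def MaxCommZero (𝓡 : S → AddSubgroup R) : Prop :=
  {x : R | ∀ y ∈ sysZero 𝓡, x * y = y * x} = (sysZero 𝓡 : Set R)

/-!
Let `I ≠ 0` be an ideal and pick a nonzero `x ∈ I` written as a sum of homogeneous elements with
the fewest possible terms. An additive map preserving `I` and every `R_s` that kills one term
kills `x`, since otherwise it would produce a shorter such element of `I`. Let `a ∈ R_s` be the
first term and `ε ∈ R_s R_{s*}` with `ε a = a`. As `R₀ R_t ⊆ R_t` by coherence (`e t ≤ t` for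
`e` idempotent), `y ↦ y - ε y` is such a map, so `ε x = x`; hence `v x ≠ 0` for a factor
`v ∈ R_{s*}` of `ε`, and `v x` is again minimal with first term in `R_{s* s} ⊆ R₀`. For such
minimal `x` the commutator with any `z ∈ Z(R₀)` kills the first term, so
`x ∈ C_R(Z(R₀)) ⊆ R₀`, and then `x = ε x ∈ R_{s s*} R₀ ⊆ R_{s s*}` is homogeneous. Therefore
`Σ_s (I ∩ R_s)` is a nonzero system ideal contained in `I`, so it is `R`. The right-handed case is
symmetric.
-/

namespace IsInverseStar

variable {star : S → S}

theorem mul_star_mul_self (h : IsInverseStar star) (s : S) : s * (star s * s) = s := by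
  rw [← mul_assoc, h.1]

theorem star_mul_star_self (h : IsInverseStar star) (s : S) :
    star s * (s * star s) = star s := by
  rw [← mul_assoc, h.2.1]

theorem mul_star_mul_self_mul (h : IsInverseStar star) (s a : S) :
    s * (star s * (s * a)) = s * a := by
  rw [← mul_assoc, ← mul_assoc, h.1]

theorem star_mul_star_self_mul (h : IsInverseStar star) (s a : S) :
    star s * (s * (star s * a)) = star s * a := by
  rw [← mul_assoc, ← mul_assoc, h.2.1]

theorem star_star (h : IsInverseStar star) (s : S) : star (star s) = s :=
  (h.2.2 _ _ (h.2.1 s) (h.1 s)).symm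

theorem star_eq_self (h : IsInverseStar star) {e : S} (he : IsIdempotentElem e) : star e = e :=
  (h.2.2 e e (by rw [he.eq, he.eq]) (by rw [he.eq, he.eq])).symm

theorem isIdempotentElem_mul_star (h : IsInverseStar star) (s : S) :
    IsIdempotentElem (s * star s) := by
  rw [IsIdempotentElem, mul_assoc, h.star_mul_star_self]

theorem isIdempotentElem_star_mul (h : IsInverseStar star) (s : S) :
    IsIdempotentElem (star s * s) := by
  rw [IsIdempotentElem, mul_assoc, h.mul_star_mul_self]

theorem isIdempotentElem_mul (h : IsInverseStar star) {e f : S} (he : IsIdempotentElem e)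
    (hf : IsIdempotentElem f) : IsIdempotentElem (e * f) := by
  have hx := h.1 (e * f)
  have hx' : ∀ a, star (e * f) * (e * (f * (star (e * f) * a))) = star (e * f) * a := fun a => by
    simpa only [mul_assoc] using congrArg (· * a) (h.2.1 (e * f))
  simp only [mul_assoc] at hx
  -- `f (e f)* e` is an inverse of `e f`, hence equal to `(e f)*`
  have hfxe : f * star (e * f) * e = star (e * f) := by
    refine h.2.2 (e * f) _ ?_ ?_ <;>
      simp only [mul_assoc, he.mul_self_mul, hf.mul_self_mul, hx, hx']
  have hx : IsIdempotentElem (star (e * f)) := by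
    calc star (e * f) * star (e * f) = f * star (e * f) * e * (f * star (e * f) * e) := by
          rw [hfxe]
      _ = f * (star (e * f) * (e * (f * (star (e * f) * e)))) := by simp only [mul_assoc]
      _ = star (e * f) := by rw [hx', ← mul_assoc, hfxe]
  rwa [← h.star_star (e * f), h.star_eq_self hx]

theorem commute_of_isIdempotentElem (h : IsInverseStar star) {e f : S}
    (he : IsIdempotentElem e) (hf : IsIdempotentElem f) : Commute e f := by
  have hef := (h.isIdempotentElem_mul he hf).eq
  have hfe := (h.isIdempotentElem_mul hf he).eq
  simp only [mul_assoc] at hef hfe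
  have hstar : f * e = star (e * f) := by
    refine h.2.2 (e * f) (f * e) ?_ ?_ <;>
      simp only [mul_assoc, he.mul_self_mul, hf.mul_self_mul, hef, hfe]
  show e * f = f * e
  rw [hstar, h.star_eq_self (h.isIdempotentElem_mul he hf)]

theorem star_mul (h : IsInverseStar star) (s t : S) : star (s * t) = star t * star s := by
  have hcomm := (h.commute_of_isIdempotentElem (h.isIdempotentElem_mul_star t)
    (h.isIdempotentElem_star_mul s)).eq
  have hcomm' : ∀ a, t * (star t * (star s * (s * a))) = star s * (s * (t * (star t * a))) :=
    fun a => by simpa only [mul_assoc] using congrArg (· * a) hcomm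
  refine (h.2.2 _ _ ?_ ?_).symm
  · calc s * t * (star t * star s) * (s * t) = s * (t * (star t * (star s * (s * t)))) := by
          simp only [mul_assoc]
      _ = s * t := by rw [hcomm', h.mul_star_mul_self_mul, h.mul_star_mul_self]
  · calc star t * star s * (s * t) * (star t * star s)
          = star t * (star s * (s * (t * (star t * star s)))) := by simp only [mul_assoc]
      _ = star t * star s := by rw [← hcomm', h.star_mul_star_self_mul, h.star_mul_star_self]

end IsInverseStar

section System

variable {star : S → S} {𝓡 : S → AddSubgroup R}

theorem Coherent.apply_idem_mul_le (hcoh : Coherent star 𝓡) (hstar : IsInverseStar star) {e : S}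
    (he : IsIdempotentElem e) (s : S) : 𝓡 (e * s) ≤ 𝓡 s := by
  refine hcoh _ _ ?_
  rw [hstar.star_mul, hstar.star_eq_self he]
  have hcomm : ∀ a, e * (s * (star s * a)) = s * (star s * (e * a)) := fun a => by
    simpa only [mul_assoc] using congrArg (· * a)
      (hstar.commute_of_isIdempotentElem he (hstar.isIdempotentElem_mul_star s)).eq
  simp only [mul_assoc, he.mul_self_mul, ← hcomm, hstar.mul_star_mul_self]

theorem Coherent.apply_mul_idem_le (hcoh : Coherent star 𝓡) (hstar : IsInverseStar star) {e : S}
    (he : IsIdempotentElem e) (s : S) : 𝓡 (s * e) ≤ 𝓡 s := by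
  refine hcoh _ _ ?_
  rw [hstar.star_mul, hstar.star_eq_self he]
  have hcomm : ∀ a, star s * (s * (e * a)) = e * (star s * (s * a)) := fun a => by
    simpa only [mul_assoc] using congrArg (· * a)
      (hstar.commute_of_isIdempotentElem (hstar.isIdempotentElem_star_mul s) he).eq
  simp only [mul_assoc, ← hcomm, he.eq, hstar.mul_star_mul_self_mul]

theorem le_sysZero {e : S} (he : IsIdempotentElem e) : 𝓡 e ≤ sysZero 𝓡 :=
  le_iSup₂_of_le e he le_rfl

theorem IsSystem.sumProd_le (hsys : IsSystem 𝓡) (s t : S) :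
    sumProd (𝓡 s) (𝓡 t) ≤ 𝓡 (s * t) :=
  (AddSubgroup.closure_le _).2 fun _ ⟨_, hx, _, hy, hxy⟩ => hxy ▸ hsys.2 s t _ hx _ hy

theorem IsSystem.mul_mem_of_mem_sysZero_left (hsys : IsSystem 𝓡) (hcoh : Coherent star 𝓡)
    (hstar : IsInverseStar star) {z a : R} (hz : z ∈ sysZero 𝓡) {s : S} (ha : a ∈ 𝓡 s) :
    z * a ∈ 𝓡 s := by
  have : sysZero 𝓡 ≤ (𝓡 s).comap (AddMonoidHom.mulRight a) :=
    iSup₂_le fun e he _ hz => hcoh.apply_idem_mul_le hstar he s (hsys.2 e s _ hz a ha)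
  exact this hz

theorem IsSystem.mul_mem_of_mem_sysZero_right (hsys : IsSystem 𝓡) (hcoh : Coherent star 𝓡)
    (hstar : IsInverseStar star) {z a : R} (hz : z ∈ sysZero 𝓡) {s : S} (ha : a ∈ 𝓡 s) :
    a * z ∈ 𝓡 s := by
  have : sysZero 𝓡 ≤ (𝓡 s).comap (AddMonoidHom.mulLeft a) :=
    iSup₂_le fun e he _ hz => hcoh.apply_mul_idem_le hstar he s (hsys.2 s e a ha _ hz)
  exact this hz

end System

theorem exists_mem_mul_ne_zero_of_mem_sumProd {A B : AddSubgroup R} {ε x : R}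
    (hε : ε ∈ sumProd A B) (h : ε * x ≠ 0) : ∃ b ∈ B, b * x ≠ 0 := by
  by_contra! hB
  have : sumProd A B ≤ (AddMonoidHom.mulRight x).ker := (AddSubgroup.closure_le _).2 <| by
    rintro _ ⟨a, -, b, hb, rfl⟩
    simp [mul_assoc, hB b hb]
  exact h (this hε)

theorem exists_mul_mem_ne_zero_of_mem_sumProd {A B : AddSubgroup R} {ε x : R}
    (hε : ε ∈ sumProd A B) (h : x * ε ≠ 0) : ∃ a ∈ A, x * a ≠ 0 := by
  by_contra! hA
  have : sumProd A B ≤ (AddMonoidHom.mulLeft x).ker := (AddSubgroup.closure_le _).2 <| by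
    rintro _ ⟨a, ha, b, -, rfl⟩
    simp [← mul_assoc, hA a ha]
  exact h (this hε)

def IsHomSum {ι : Type*} (𝓡 : ι → AddSubgroup R) (l : List R) : Prop :=
  ∀ a ∈ l, ∃ i, a ∈ 𝓡 i

structure IsMinimalHomSum {ι : Type*} (𝓡 : ι → AddSubgroup R) (I : AddSubgroup R) (l : List R) :
    Prop where
  isHomSum : IsHomSum 𝓡 l
  sum_mem : l.sum ∈ I
  sum_ne_zero : l.sum ≠ 0
  sum_eq_zero_of_length_lt :
    ∀ l' : List R, IsHomSum 𝓡 l' → l'.length < l.length → l'.sum ∈ I → l'.sum = 0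

section HomSum

variable {ι : Type*} {𝓡 : ι → AddSubgroup R} {I : AddSubgroup R}

theorem IsHomSum.map {l : List R} (hl : IsHomSum 𝓡 l) {g : R →+ R}
    (hg : ∀ i, ∀ x ∈ 𝓡 i, ∃ j, g x ∈ 𝓡 j) : IsHomSum 𝓡 (l.map g) := by
  simp only [IsHomSum, List.mem_map, forall_exists_index, and_imp, forall_apply_eq_imp_iff₂]
  intro a ha
  obtain ⟨i, hi⟩ := hl a ha
  exact hg i a hi

theorem exists_isHomSum_of_mem_iSup {x : R} (hx : x ∈ ⨆ i, 𝓡 i) :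
    ∃ l, IsHomSum 𝓡 l ∧ l.sum = x := by
  refine AddSubgroup.iSup_induction 𝓡 (C := fun x => ∃ l, IsHomSum 𝓡 l ∧ l.sum = x) hx
    (fun i x hx => ⟨[x], by simpa [IsHomSum] using ⟨i, hx⟩, List.sum_singleton⟩)
    ⟨[], by simp [IsHomSum], List.sum_nil⟩ fun x y ⟨l, hl, hlx⟩ ⟨l', hl', hly⟩ => ?_
  refine ⟨l ++ l', fun a ha => (List.mem_append.1 ha).elim (hl a) (hl' a), ?_⟩
  rw [List.sum_append, hlx, hly]

theorem exists_isMinimalHomSum (h𝓡 : (⨆ i, 𝓡 i) = ⊤) {x : R} (hxI : x ∈ I) (hx : x ≠ 0) :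
    ∃ l, IsMinimalHomSum 𝓡 I l := by
  classical
  have hex : ∃ n, ∃ l : List R, IsHomSum 𝓡 l ∧ l.length = n ∧ l.sum ∈ I ∧ l.sum ≠ 0 := by
    obtain ⟨l, hl, rfl⟩ := exists_isHomSum_of_mem_iSup (h𝓡 ▸ AddSubgroup.mem_top x)
    exact ⟨_, l, hl, rfl, hxI, hx⟩
  obtain ⟨l, hl, hlen, hlI, hl0⟩ := Nat.find_spec hex
  refine ⟨l, hl, hlI, hl0, fun l' hl' hlt hl'I => ?_⟩
  by_contra hl'0
  exact Nat.find_min hex (hlen ▸ hlt) ⟨l', hl', rfl, hl'I, hl'0⟩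

theorem IsMinimalHomSum.map {l : List R} (h : IsMinimalHomSum 𝓡 I l) {g : R →+ R}
    (hgI : ∀ x ∈ I, g x ∈ I) (hg : ∀ i, ∀ x ∈ 𝓡 i, ∃ j, g x ∈ 𝓡 j) (h0 : g l.sum ≠ 0) :
    IsMinimalHomSum 𝓡 I (l.map g) := by
  have hsum : (l.map g).sum = g l.sum := (map_list_sum g l).symm
  exact ⟨h.isHomSum.map hg, hsum ▸ hgI _ h.sum_mem, hsum ▸ h0,
    fun l' hl' hlt => h.sum_eq_zero_of_length_lt l' hl' (by simpa using hlt)⟩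

theorem IsMinimalHomSum.map_sum_eq_zero {a : R} {l : List R} (h : IsMinimalHomSum 𝓡 I (a :: l))
    {g : R →+ R} (hgI : ∀ x ∈ I, g x ∈ I) (hg : ∀ i, ∀ x ∈ 𝓡 i, g x ∈ 𝓡 i) (ha : g a = 0) :
    g (a :: l).sum = 0 := by
  have hsum : g (a :: l).sum = (l.map g).sum := by simp [map_list_sum, ha]
  rw [hsum]
  refine h.sum_eq_zero_of_length_lt _ ?_ (by simp) (hsum ▸ hgI _ h.sum_mem)
  exact IsHomSum.map (fun b hb => h.isHomSum b (List.mem_cons_of_mem a hb))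
    fun i x hx => ⟨i, hg i x hx⟩

end HomSum

section Minimal

variable {star : S → S} {𝓡 : S → AddSubgroup R} {I : AddSubgroup R}

theorem IsMinimalHomSum.mul_sum_eq_sum (hstar : IsInverseStar star) (hsys : IsSystem 𝓡)
    (hcoh : Coherent star 𝓡) (hI : IsRingIdeal I) {a : R} {l : List R}
    (h : IsMinimalHomSum 𝓡 I (a :: l)) {ε : R} (hε : ε ∈ sysZero 𝓡) (ha : ε * a = a) :
    ε * (a :: l).sum = (a :: l).sum := by
  have := h.map_sum_eq_zero (g := AddMonoidHom.id R - AddMonoidHom.mulLeft ε)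
    (fun x hx => sub_mem hx (hI ε x hx).1)
    (fun s x hx => sub_mem hx (hsys.mul_mem_of_mem_sysZero_left hcoh hstar hε hx))
    (sub_eq_zero.2 ha.symm)
  exact (sub_eq_zero.1 this).symm

theorem IsMinimalHomSum.sum_mul_eq_sum (hstar : IsInverseStar star) (hsys : IsSystem 𝓡)
    (hcoh : Coherent star 𝓡) (hI : IsRingIdeal I) {a : R} {l : List R}
    (h : IsMinimalHomSum 𝓡 I (a :: l)) {ε : R} (hε : ε ∈ sysZero 𝓡) (ha : a * ε = a) :
    (a :: l).sum * ε = (a :: l).sum := by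
  have := h.map_sum_eq_zero (g := AddMonoidHom.id R - AddMonoidHom.mulRight ε)
    (fun x hx => sub_mem hx (hI ε x hx).2)
    (fun s x hx => sub_mem hx (hsys.mul_mem_of_mem_sysZero_right hcoh hstar hε hx))
    (sub_eq_zero.2 ha.symm)
  exact (sub_eq_zero.1 this).symm

theorem IsMinimalHomSum.sum_mem_centCenterZero (hstar : IsInverseStar star) (hsys : IsSystem 𝓡)
    (hcoh : Coherent star 𝓡) (hI : IsRingIdeal I) {a : R} {l : List R}
    (h : IsMinimalHomSum 𝓡 I (a :: l)) (ha : a ∈ sysZero 𝓡) :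
    (a :: l).sum ∈ centCenterZero 𝓡 := by
  rintro z ⟨hz, hzc⟩
  have := h.map_sum_eq_zero (g := AddMonoidHom.mulRight z - AddMonoidHom.mulLeft z)
    (fun x hx => sub_mem (hI z x hx).2 (hI z x hx).1)
    (fun s x hx => sub_mem (hsys.mul_mem_of_mem_sysZero_right hcoh hstar hz hx)
      (hsys.mul_mem_of_mem_sysZero_left hcoh hstar hz hx))
    (sub_eq_zero.2 (hzc a ha).symm)
  exact sub_eq_zero.1 this

theorem IsMinimalHomSum.exists_cons_mem_sysZero (hstar : IsInverseStar star)
    (hsys : IsSystem 𝓡) (hcoh : Coherent star 𝓡) (heps : LeftSEps star 𝓡 ∨ RightSEps star 𝓡)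
    (hI : IsRingIdeal I) {l : List R} (h : IsMinimalHomSum 𝓡 I l) :
    ∃ a l', IsMinimalHomSum 𝓡 I (a :: l') ∧ a ∈ sysZero 𝓡 := by
  obtain _ | ⟨a, l⟩ := l
  · exact absurd List.sum_nil h.sum_ne_zero
  obtain ⟨s, ha⟩ := h.isHomSum a List.mem_cons_self
  rcases heps with hL | hR
  · obtain ⟨ε, hε, hεa⟩ := hL s a ha
    have hεx := h.mul_sum_eq_sum hstar hsys hcoh hI
      (le_sysZero (hstar.isIdempotentElem_mul_star s) (hsys.sumProd_le _ _ hε)) hεa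
    obtain ⟨v, hv, hvx⟩ := exists_mem_mul_ne_zero_of_mem_sumProd hε (hεx.symm ▸ h.sum_ne_zero)
    exact ⟨v * a, l.map (AddMonoidHom.mulLeft v),
      h.map (g := AddMonoidHom.mulLeft v) (fun x hx => (hI v x hx).1)
        (fun t x hx => ⟨_, hsys.2 _ t v hv x hx⟩) hvx,
      le_sysZero (hstar.isIdempotentElem_star_mul s) (hsys.2 _ _ v hv a ha)⟩
  · obtain ⟨ε, hε, hεa⟩ := hR s a ha
    have hεx := h.sum_mul_eq_sum hstar hsys hcoh hI
      (le_sysZero (hstar.isIdempotentElem_star_mul s) (hsys.sumProd_le _ _ hε)) hεa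
    obtain ⟨u, hu, hxu⟩ := exists_mul_mem_ne_zero_of_mem_sumProd hε (hεx.symm ▸ h.sum_ne_zero)
    exact ⟨a * u, l.map (AddMonoidHom.mulRight u),
      h.map (g := AddMonoidHom.mulRight u) (fun x hx => (hI u x hx).2)
        (fun t x hx => ⟨_, hsys.2 t _ x hx u hu⟩) hxu,
      le_sysZero (hstar.isIdempotentElem_mul_star s) (hsys.2 _ _ a ha u hu)⟩

theorem IsMinimalHomSum.exists_sum_mem_of_sum_mem_sysZero (hstar : IsInverseStar star)
    (hsys : IsSystem 𝓡) (hcoh : Coherent star 𝓡) (heps : LeftSEps star 𝓡 ∨ RightSEps star 𝓡)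
    (hI : IsRingIdeal I) {l : List R} (h : IsMinimalHomSum 𝓡 I l) (hl : l.sum ∈ sysZero 𝓡) :
    ∃ s, l.sum ∈ 𝓡 s := by
  obtain _ | ⟨a, l⟩ := l
  · exact absurd List.sum_nil h.sum_ne_zero
  obtain ⟨s, ha⟩ := h.isHomSum a List.mem_cons_self
  rcases heps with hL | hR
  · obtain ⟨ε, hε, hεa⟩ := hL s a ha
    have hεs := hsys.sumProd_le _ _ hε
    have hεx := h.mul_sum_eq_sum hstar hsys hcoh hI
      (le_sysZero (hstar.isIdempotentElem_mul_star s) hεs) hεa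
    exact ⟨_, hεx ▸ hsys.mul_mem_of_mem_sysZero_right hcoh hstar hl hεs⟩
  · obtain ⟨ε, hε, hεa⟩ := hR s a ha
    have hεs := hsys.sumProd_le _ _ hε
    have hεx := h.sum_mul_eq_sum hstar hsys hcoh hI
      (le_sysZero (hstar.isIdempotentElem_star_mul s) hεs) hεa
    exact ⟨_, hεx ▸ hsys.mul_mem_of_mem_sysZero_left hcoh hstar hl hεs⟩

end Minimal

theorem isSystemIdeal_iSup_inf {𝓡 : S → AddSubgroup R} (hsys : IsSystem 𝓡) {I : AddSubgroup R}
    (hI : IsRingIdeal I) : IsSystemIdeal 𝓡 (⨆ s, I ⊓ 𝓡 s) := by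
  set J := ⨆ s, I ⊓ 𝓡 s
  have hhom : ∀ s, ∀ x ∈ I ⊓ 𝓡 s, ∀ r, r * x ∈ J ∧ x * r ∈ J := by
    intro s x hx r
    have hr : r ∈ ⨆ t, 𝓡 t := hsys.1 ▸ AddSubgroup.mem_top r
    refine AddSubgroup.iSup_induction 𝓡 (C := fun r => r * x ∈ J ∧ x * r ∈ J) hr
      (fun t r hr => ?_) (by simp [zero_mem]) fun r r' h h' => ?_
    · exact ⟨AddSubgroup.mem_iSup_of_mem (t * s) ⟨(hI r x hx.1).1, hsys.2 t s r hr x hx.2⟩,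
        AddSubgroup.mem_iSup_of_mem (s * t) ⟨(hI r x hx.1).2, hsys.2 s t x hx.2 r hr⟩⟩
    · simpa only [add_mul, mul_add] using ⟨add_mem h.1 h'.1, add_mem h.2 h'.2⟩
  refine ⟨fun r x hx => ?_, le_antisymm ?_ (iSup_le fun s => inf_le_left)⟩
  · refine AddSubgroup.iSup_induction _ (C := fun x => r * x ∈ J ∧ x * r ∈ J) hx
      (fun s x hx => hhom s x hx r) (by simp [zero_mem]) fun x x' h h' => ?_
    simpa only [add_mul, mul_add] using ⟨add_mem h.1 h'.1, add_mem h.2 h'.2⟩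
  · exact iSup_le fun s => le_iSup_of_le s (le_inf (le_iSup (fun s => I ⊓ 𝓡 s) s) inf_le_right)

theorem exists_ne_zero_mem_inf {star : S → S} {𝓡 : S → AddSubgroup R} (hstar : IsInverseStar star)
    (hsys : IsSystem 𝓡) (hcoh : Coherent star 𝓡) (heps : LeftSEps star 𝓡 ∨ RightSEps star 𝓡)
    (hcent : centCenterZero 𝓡 ⊆ (sysZero 𝓡 : Set R)) {I : AddSubgroup R} (hI : IsRingIdeal I)
    {x : R} (hxI : x ∈ I) (hx : x ≠ 0) : ∃ s, ∃ w ∈ I ⊓ 𝓡 s, w ≠ 0 := by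
  obtain ⟨l, hl⟩ := exists_isMinimalHomSum hsys.1 hxI hx
  obtain ⟨a, l', hl', ha⟩ := hl.exists_cons_mem_sysZero hstar hsys hcoh heps hI
  obtain ⟨s, hs⟩ := hl'.exists_sum_mem_of_sum_mem_sysZero hstar hsys hcoh heps hI
    (hcent (hl'.sum_mem_centCenterZero hstar hsys hcoh hI ha))
  exact ⟨s, _, ⟨hl'.sum_mem, hs⟩, hl'.sum_ne_zero⟩

/-- If `S` is an inverse semigroup and `R` is a coherent, system simple,
left (or right) s-unital epsilon-strong system over `S` with `C_R(Z(R₀)) ⊆ R₀`,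
then `R` is a simple ring. -/
theorem stmt0 {S R : Type*} [Semigroup S] [NonUnitalRing R]
    (star : S → S) (hstar : IsInverseStar star)
    (𝓡 : S → AddSubgroup R) (hsys : IsSystem 𝓡)
    (hcoh : Coherent star 𝓡)
    (heps : LeftSEps star 𝓡 ∨ RightSEps star 𝓡)
    (hss : SystemSimple 𝓡)
    (hcent : centCenterZero 𝓡 ⊆ (sysZero 𝓡 : Set R)) :
    RingSimple R := by
  intro I hI
  refine or_iff_not_imp_left.2 fun hne => ?_
  obtain ⟨x, hxI, hx⟩ := not_forall₂.1 (mt (AddSubgroup.eq_bot_iff_forall I).2 hne)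
  obtain ⟨s, w, hw, hw0⟩ := exists_ne_zero_mem_inf hstar hsys hcoh heps hcent hI hxI hx
  rcases hss _ (isSystemIdeal_iSup_inf hsys hI) with hbot | htop
  · exact absurd ((AddSubgroup.mem_bot).1 (hbot ▸ AddSubgroup.mem_iSup_of_mem s hw)) hw0
  · exact top_le_iff.1 (htop ▸ iSup_le fun s => inf_le_left)

end PaperSys
end

section
/- Let G be a groupoid and let R be a G-graded ring that is graded simple and whose grading is left (or right) non-degenerate. If ∩_{e∈G_0} C_R(Z(R_e)) ⊆ R_0, then R is a simple ring. -/
open Pointwise CategoryTheory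

namespace PaperGrpd

/-- The set of morphisms `G₁` of a groupoid, bundled with their domain and codomain:
`⟨a, b, g⟩` is the morphism `g : a ⟶ b`, with `d(g) = a` and `c(g) = b`. -/
abbrev GMor (G : Type*) [Groupoid G] := Σ a b : G, a ⟶ b

variable {G : Type*} [Groupoid G] {R : Type*} [NonUnitalRing R]

/-- The additive subgroup of finite sums of products `a * b` with `a ∈ A`, `b ∈ B`. -/
def sumProd (A B : AddSubgroup R) : AddSubgroup R :=
  AddSubgroup.closure ((A : Set R) * (B : Set R))

/-- `I` is a two-sided ideal of the (possibly non-unital) ring `R`. -/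
def IsRingIdeal (I : AddSubgroup R) : Prop :=
  ∀ r : R, ∀ x ∈ I, r * x ∈ I ∧ x * r ∈ I

/-- `𝓡` is a grading of `R` by the groupoid `G`:
`R = ⊕_{g ∈ G₁} R_g`, with `R_g R_h ⊆ R_{gh}` for composable pairs and
`R_g R_h = {0}` for non-composable pairs. -/
def IsGroupoidGrading (𝓡 : GMor G → AddSubgroup R) : Prop :=
  (⨆ m : GMor G, 𝓡 m) = (⊤ : AddSubgroup R) ∧
  (∀ m : GMor G, Disjoint (𝓡 m) (⨆ m' ∈ {m' : GMor G | m' ≠ m}, 𝓡 m')) ∧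
  (∀ (a b c : G) (g : b ⟶ c) (h : a ⟶ b),
    ∀ x ∈ 𝓡 ⟨b, c, g⟩, ∀ y ∈ 𝓡 ⟨a, b, h⟩, x * y ∈ 𝓡 ⟨a, c, h ≫ g⟩) ∧
  (∀ m m' : GMor G, m.1 ≠ m'.2.1 → ∀ x ∈ 𝓡 m, ∀ y ∈ 𝓡 m', x * y = 0)

/-- `R₀ = ⊕_{e ∈ G₀} R_e`. -/
def grZero (𝓡 : GMor G → AddSubgroup R) : AddSubgroup R :=
  ⨆ e : G, 𝓡 ⟨e, e, 𝟙 e⟩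

/-- `∩_{e ∈ G₀} C_R(Z(R_e))` as a subset of `R`. -/
def capCent (𝓡 : GMor G → AddSubgroup R) : Set R :=
  {x : R | ∀ e : G, ∀ z : R,
    (z ∈ 𝓡 ⟨e, e, 𝟙 e⟩ ∧ ∀ y ∈ 𝓡 ⟨e, e, 𝟙 e⟩, z * y = y * z) → x * z = z * x}

/-- `R` is graded simple: `{0}` and `R` are the only graded ideals. -/
def GradedSimple (𝓡 : GMor G → AddSubgroup R) : Prop :=
  ∀ I : AddSubgroup R, IsRingIdeal I → I = (⨆ m : GMor G, (I ⊓ 𝓡 m)) →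
    I = ⊥ ∨ I = ⊤

/-- The grading is left non-degenerate. -/
def LeftNonDeg (𝓡 : GMor G → AddSubgroup R) : Prop :=
  ∀ (a b : G) (g : a ⟶ b), ∀ r ∈ 𝓡 ⟨a, b, g⟩, r ≠ 0 →
    ∃ x ∈ 𝓡 ⟨b, a, Groupoid.inv g⟩, x * r ≠ 0

/-- The grading is right non-degenerate. -/
def RightNonDeg (𝓡 : GMor G → AddSubgroup R) : Prop :=
  ∀ (a b : G) (g : a ⟶ b), ∀ r ∈ 𝓡 ⟨a, b, g⟩, r ≠ 0 →
    ∃ x ∈ 𝓡 ⟨b, a, Groupoid.inv g⟩, r * x ≠ 0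

/-- `R` is a simple ring: `{0}` and `R` are the only two-sided ideals. -/
def RingSimple (R' : Type*) [NonUnitalRing R'] : Prop :=
  ∀ I : AddSubgroup R', IsRingIdeal I → I = ⊥ ∨ I = ⊤

/-!
Let `I ≠ 0` be an ideal and `x ∈ I \ {0}` a sum of as few homogeneous elements as possible.
Pick a nonzero component `x_g`, `g : a ⟶ b`. Left non-degeneracy (the right case is symmetric)
gives `s ∈ R_{g⁻¹}` with `s x_g ≠ 0`, so `s x ∈ I` is again minimal and has a nonzero component
of degree `𝟙 a`. For `z ∈ Z(R_e)` each summand `y` of `s x` gives a homogeneous `y z - z y` of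
the same degree, and the summand of degree `𝟙 a` gives `0`; hence `[s x, z] ∈ I` is shorter than
`x`, so it vanishes. Thus `s x` centralises every `Z(R_e)` and lies in `R₀`, and a suitable
`t ∈ R_{𝟙 a}` makes `t s x` a nonzero element of `I ∩ R_{𝟙 a}`. The homogeneous elements of `I`
span a nonzero graded ideal contained in `I`, which is `R` by graded simplicity.
-/

open DirectSum

section Decomposition

variable {ι M : Type*} [DecidableEq ι] [AddCommGroup M] (𝓜 : ι → AddSubgroup M)
  [Decomposition 𝓜]

theorem exists_decompose_ne_zero {x : M} (hx : x ≠ 0) : ∃ i, (decompose 𝓜 x i : M) ≠ 0 := by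
  by_contra! h
  refine hx ((decompose 𝓜).injective ?_)
  ext i
  simp [h]

theorem mem_of_decompose_ne_zero {x : M} {i j : ι} (hx : x ∈ 𝓜 j)
    (hxi : (decompose 𝓜 x i : M) ≠ 0) : x ∈ 𝓜 i := by
  obtain rfl : j = i := by_contra fun hji => hxi (decompose_of_mem_ne 𝓜 hx hji)
  exact hx

theorem exists_mem_decompose_ne_zero {S : Multiset M} {i : ι}
    (hS : (decompose 𝓜 S.sum i : M) ≠ 0) : ∃ y ∈ S, (decompose 𝓜 y i : M) ≠ 0 := by
  contrapose! hS
  induction S using Multiset.induction_on with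
  | empty => simp
  | cons y S ih =>
    simp only [Multiset.mem_cons, forall_eq_or_imp] at hS
    simp [decompose_add, hS.1, ih hS.2]

theorem decompose_map_eq_map_decompose (φ : M →+ M) {i j : ι} (hi : ∀ x ∈ 𝓜 i, φ x ∈ 𝓜 j)
    (hne : ∀ k ≠ i, ∀ x ∈ 𝓜 k, (decompose 𝓜 (φ x) j : M) = 0) (x : M) :
    (decompose 𝓜 (φ x) j : M) = φ (decompose 𝓜 x i) := by
  induction x using Decomposition.inductionOn 𝓜 with
  | zero => simp
  | @homogeneous k x =>
    by_cases hk : k = i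
    · subst hk
      rw [decompose_of_mem_same 𝓜 x.2, decompose_of_mem_same 𝓜 (hi x x.2)]
    · rw [hne k hk x x.2, decompose_of_mem_ne 𝓜 x.2 hk, map_zero]
  | add x y hx hy => simp [decompose_add, hx, hy]

end Decomposition

variable {𝓡 : GMor G → AddSubgroup R}

namespace IsGroupoidGrading

theorem iSup_eq_top (hgr : IsGroupoidGrading 𝓡) : ⨆ m, 𝓡 m = ⊤ := hgr.1

theorem mul_mem (hgr : IsGroupoidGrading 𝓡) {a b c : G} {g : b ⟶ c} {h : a ⟶ b} {x y : R}
    (hx : x ∈ 𝓡 ⟨b, c, g⟩) (hy : y ∈ 𝓡 ⟨a, b, h⟩) : x * y ∈ 𝓡 ⟨a, c, h ≫ g⟩ :=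
  hgr.2.2.1 a b c g h x hx y hy

theorem mul_eq_zero (hgr : IsGroupoidGrading 𝓡) {m m' : GMor G} (hmm' : m.1 ≠ m'.2.1)
    {x y : R} (hx : x ∈ 𝓡 m) (hy : y ∈ 𝓡 m') : x * y = 0 :=
  hgr.2.2.2 m m' hmm' x hx y hy

theorem isInternal [DecidableEq (GMor G)] (hgr : IsGroupoidGrading 𝓡) : IsInternal 𝓡 :=
  (isInternal_submodule_iff_iSupIndep_and_iSup_eq_top fun m => (𝓡 m).toIntSubmodule).2
    ⟨(iSupIndep_map_orderIso_iff AddSubgroup.toIntSubmodule).2 hgr.2.1,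
      by rw [← map_iSup, hgr.iSup_eq_top, map_top]⟩

end IsGroupoidGrading

theorem mul_mem_of_mem_id_right (hgr : IsGroupoidGrading 𝓡) {m : GMor G} {e : G} {y z : R}
    (hy : y ∈ 𝓡 m) (hz : z ∈ 𝓡 ⟨e, e, 𝟙 e⟩) : y * z ∈ 𝓡 m := by
  obtain ⟨a, b, f⟩ := m
  by_cases hae : a = e
  · subst hae
    simpa using hgr.mul_mem hy hz
  · rw [hgr.mul_eq_zero hae hy hz]
    exact zero_mem _

theorem mul_mem_of_mem_id_left (hgr : IsGroupoidGrading 𝓡) {m : GMor G} {e : G} {y z : R}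
    (hz : z ∈ 𝓡 ⟨e, e, 𝟙 e⟩) (hy : y ∈ 𝓡 m) : z * y ∈ 𝓡 m := by
  obtain ⟨a, b, f⟩ := m
  by_cases hbe : b = e
  · subst hbe
    simpa using hgr.mul_mem hz hy
  · rw [hgr.mul_eq_zero (Ne.symm hbe) hz hy]
    exact zero_mem _

theorem isHomogeneousElem_mul (hgr : IsGroupoidGrading 𝓡) {x y : R}
    (hx : SetLike.IsHomogeneousElem 𝓡 x) (hy : SetLike.IsHomogeneousElem 𝓡 y) :
    SetLike.IsHomogeneousElem 𝓡 (x * y) := by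
  obtain ⟨⟨b, c, g⟩, hx⟩ := hx
  obtain ⟨⟨a, b', h⟩, hy⟩ := hy
  by_cases hb : b = b'
  · subst hb
    exact ⟨_, hgr.mul_mem hx hy⟩
  · exact ⟨_, hgr.mul_eq_zero hb hx hy ▸ zero_mem (𝓡 ⟨b, c, g⟩)⟩

theorem mul_mem_of_mem_grZero_right (hgr : IsGroupoidGrading 𝓡) {m : GMor G} {y x : R}
    (hy : y ∈ 𝓡 m) (hx : x ∈ grZero 𝓡) : y * x ∈ 𝓡 m :=
  AddSubgroup.iSup_induction _ (C := fun x => y * x ∈ 𝓡 m) hx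
    (fun _ _ hz => mul_mem_of_mem_id_right hgr hy hz)
    (by simp [zero_mem]) fun _ _ h₁ h₂ => by rw [mul_add]; exact add_mem h₁ h₂

theorem mul_mem_of_mem_grZero_left (hgr : IsGroupoidGrading 𝓡) {m : GMor G} {y x : R}
    (hx : x ∈ grZero 𝓡) (hy : y ∈ 𝓡 m) : x * y ∈ 𝓡 m :=
  AddSubgroup.iSup_induction _ (C := fun x => x * y ∈ 𝓡 m) hx
    (fun _ _ hz => mul_mem_of_mem_id_left hgr hz hy)
    (by simp [zero_mem]) fun _ _ h₁ h₂ => by rw [add_mul]; exact add_mem h₁ h₂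

theorem commute_of_mem_id (hgr : IsGroupoidGrading 𝓡) {a e : G} {y z : R}
    (hy : y ∈ 𝓡 ⟨a, a, 𝟙 a⟩) (hz : z ∈ 𝓡 ⟨e, e, 𝟙 e⟩)
    (hzc : ∀ w ∈ 𝓡 ⟨e, e, 𝟙 e⟩, z * w = w * z) : y * z = z * y := by
  by_cases hae : a = e
  · subst hae
    exact (hzc y hy).symm
  · rw [hgr.mul_eq_zero hae hy hz, hgr.mul_eq_zero (Ne.symm hae) hz hy]

theorem decompose_mul_left [DecidableEq (GMor G)] [Decomposition 𝓡]
    (hgr : IsGroupoidGrading 𝓡) {p q a : G} {u : p ⟶ q} {s : R} (hs : s ∈ 𝓡 ⟨p, q, u⟩)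
    (m : a ⟶ p) (x : R) :
    (decompose 𝓡 (s * x) ⟨a, q, m ≫ u⟩ : R) = s * decompose 𝓡 x ⟨a, p, m⟩ := by
  refine decompose_map_eq_map_decompose 𝓡 (AddMonoidHom.mulLeft s)
    (fun y hy => hgr.mul_mem hs hy) (fun ⟨a', b', f⟩ hne y hy => ?_) x
  by_cases hb : b' = p
  · subst hb
    refine decompose_of_mem_ne 𝓡 (hgr.mul_mem hs hy) fun h => hne ?_
    obtain rfl : a' = a := congrArg Sigma.fst h
    simpa [cancel_mono] using h
  · simp [hgr.mul_eq_zero (m := ⟨p, q, u⟩) (Ne.symm hb) hs hy]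

theorem decompose_mul_right [DecidableEq (GMor G)] [Decomposition 𝓡]
    (hgr : IsGroupoidGrading 𝓡) {p q b : G} {u : p ⟶ q} {s : R} (hs : s ∈ 𝓡 ⟨p, q, u⟩)
    (m : q ⟶ b) (x : R) :
    (decompose 𝓡 (x * s) ⟨p, b, u ≫ m⟩ : R) = decompose 𝓡 x ⟨q, b, m⟩ * s := by
  refine decompose_map_eq_map_decompose 𝓡 (AddMonoidHom.mulRight s)
    (fun y hy => hgr.mul_mem hy hs) (fun ⟨a', b', f⟩ hne y hy => ?_) x
  by_cases ha : a' = q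
  · subst ha
    refine decompose_of_mem_ne 𝓡 (hgr.mul_mem hy hs) fun h => hne ?_
    obtain rfl : b' = b := congrArg (fun m : GMor G => m.2.1) h
    simpa [cancel_epi] using h
  · simp [hgr.mul_eq_zero (m' := ⟨p, q, u⟩) ha hy hs]

def HomogeneousLengthLE (𝓡 : GMor G → AddSubgroup R) (n : ℕ) (x : R) : Prop :=
  ∃ S : Multiset R, Multiset.card S ≤ n ∧ (∀ y ∈ S, SetLike.IsHomogeneousElem 𝓡 y) ∧ S.sum = x

theorem exists_homogeneousLengthLE (hgr : IsGroupoidGrading 𝓡) (x : R) :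
    ∃ n, HomogeneousLengthLE 𝓡 n x := by
  refine AddSubgroup.iSup_induction 𝓡 (C := fun x => ∃ n, HomogeneousLengthLE 𝓡 n x)
    (hgr.iSup_eq_top ▸ AddSubgroup.mem_top x) (fun m y hy => ⟨1, {y}, by simp, ?_, by simp⟩)
    ⟨0, 0, by simp, by simp, by simp⟩ ?_
  · simpa using ⟨m, hy⟩
  · rintro _ _ ⟨n₁, S₁, hS₁n, hS₁, rfl⟩ ⟨n₂, S₂, hS₂n, hS₂, rfl⟩
    refine ⟨n₁ + n₂, S₁ + S₂, by simpa using add_le_add hS₁n hS₂n, ?_, Multiset.sum_add _ _⟩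
    simpa [or_imp, forall_and] using ⟨hS₁, hS₂⟩

theorem HomogeneousLengthLE.mul_left (hgr : IsGroupoidGrading 𝓡) {n : ℕ} {s x : R}
    (hs : SetLike.IsHomogeneousElem 𝓡 s) (hx : HomogeneousLengthLE 𝓡 n x) :
    HomogeneousLengthLE 𝓡 n (s * x) := by
  obtain ⟨S, hSn, hS, rfl⟩ := hx
  refine ⟨S.map (s * ·), by simpa using hSn, ?_,
    by simpa using Multiset.sum_map_mul_left (s := S) (a := s) (f := id)⟩
  simpa using fun y hy => isHomogeneousElem_mul hgr hs (hS y hy)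

theorem HomogeneousLengthLE.mul_right (hgr : IsGroupoidGrading 𝓡) {n : ℕ} {s x : R}
    (hs : SetLike.IsHomogeneousElem 𝓡 s) (hx : HomogeneousLengthLE 𝓡 n x) :
    HomogeneousLengthLE 𝓡 n (x * s) := by
  obtain ⟨S, hSn, hS, rfl⟩ := hx
  refine ⟨S.map (· * s), by simpa using hSn, ?_,
    by simpa using Multiset.sum_map_mul_right (s := S) (a := s) (f := id)⟩
  simpa using fun y hy => isHomogeneousElem_mul hgr (hS y hy) hs

theorem homogeneousLengthLE_commutator [DecidableEq R] (hgr : IsGroupoidGrading 𝓡)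
    {S : Multiset R} (hS : ∀ y ∈ S, SetLike.IsHomogeneousElem 𝓡 y) {y₀ z : R} (hy₀ : y₀ ∈ S)
    {e : G} (hz : z ∈ 𝓡 ⟨e, e, 𝟙 e⟩) (hy₀z : y₀ * z = z * y₀) :
    HomogeneousLengthLE 𝓡 (Multiset.card (S.erase y₀)) (S.sum * z - z * S.sum) := by
  set φ : R →+ R := AddMonoidHom.mulRight z - AddMonoidHom.mulLeft z
  refine ⟨(S.erase y₀).map φ, by simp, ?_, ?_⟩
  · simp only [Multiset.mem_map]
    rintro _ ⟨y, hy, rfl⟩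
    obtain ⟨m, hm⟩ := hS y (Multiset.mem_of_mem_erase hy)
    exact ⟨m, sub_mem (mul_mem_of_mem_id_right hgr hm hz) (mul_mem_of_mem_id_left hgr hz hm)⟩
  · have hφ : φ y₀ = 0 := sub_eq_zero.2 hy₀z
    rw [← zero_add (Multiset.sum _), ← hφ, Multiset.sum_map_erase hy₀, ← map_multiset_sum]
    rfl

theorem isRingIdeal_iSup_inf (hgr : IsGroupoidGrading 𝓡) {I : AddSubgroup R}
    (hI : IsRingIdeal I) : IsRingIdeal (⨆ m, I ⊓ 𝓡 m) := by
  set J := ⨆ m, I ⊓ 𝓡 m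
  have hJ : ∀ v ∈ I, SetLike.IsHomogeneousElem 𝓡 v → v ∈ J :=
    fun v hvI ⟨m, hvm⟩ => AddSubgroup.mem_iSup_of_mem m ⟨hvI, hvm⟩
  intro r x hx
  refine AddSubgroup.iSup_induction _ (C := fun x => r * x ∈ J ∧ x * r ∈ J) hx ?_
    (by simp [zero_mem]) fun _ _ h₁ h₂ => ⟨by rw [mul_add]; exact add_mem h₁.1 h₂.1,
      by rw [add_mul]; exact add_mem h₁.2 h₂.2⟩
  rintro m w ⟨hwI, hwm⟩
  refine AddSubgroup.iSup_induction 𝓡 (C := fun r => r * w ∈ J ∧ w * r ∈ J)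
    (hgr.iSup_eq_top ▸ AddSubgroup.mem_top r) (fun m' r hr => ?_)
    (by simp [zero_mem]) fun _ _ h₁ h₂ => ⟨by rw [add_mul]; exact add_mem h₁.1 h₂.1,
      by rw [mul_add]; exact add_mem h₁.2 h₂.2⟩
  exact ⟨hJ _ (hI r w hwI).1 (isHomogeneousElem_mul hgr ⟨m', hr⟩ ⟨m, hwm⟩),
    hJ _ (hI r w hwI).2 (isHomogeneousElem_mul hgr ⟨m, hwm⟩ ⟨m', hr⟩)⟩

theorem eq_top_of_homogeneous_mem (hgr : IsGroupoidGrading 𝓡) (hgs : GradedSimple 𝓡)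
    {I : AddSubgroup R} (hI : IsRingIdeal I) {m : GMor G} {v : R} (hvI : v ∈ I)
    (hvm : v ∈ 𝓡 m) (hv : v ≠ 0) : I = ⊤ := by
  set J := ⨆ m, I ⊓ 𝓡 m
  have hJI : J ≤ I := iSup_le fun _ => inf_le_left
  have hJgr : J = ⨆ m, J ⊓ 𝓡 m :=
    le_antisymm (iSup_mono fun m => le_inf (le_iSup (fun m => I ⊓ 𝓡 m) m) inf_le_right)
      (iSup_le fun _ => inf_le_left)
  rcases hgs J (isRingIdeal_iSup_inf hgr hI) hJgr with hJ | hJ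
  · exact absurd ((AddSubgroup.mem_bot).1 (hJ ▸ AddSubgroup.mem_iSup_of_mem m ⟨hvI, hvm⟩)) hv
  · exact top_le_iff.1 (hJ ▸ hJI)

theorem exists_minimal_homogeneousLengthLE (hgr : IsGroupoidGrading 𝓡) {I : AddSubgroup R}
    (hI : I ≠ ⊥) : ∃ n, ∃ x ∈ I, x ≠ 0 ∧ HomogeneousLengthLE 𝓡 n x ∧
      ∀ w ∈ I, ∀ k < n, HomogeneousLengthLE 𝓡 k w → w = 0 := by
  classical
  have hex : ∃ n, ∃ x ∈ I, x ≠ 0 ∧ HomogeneousLengthLE 𝓡 n x := by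
    obtain ⟨x, hxI, hx⟩ := I.bot_or_exists_ne_zero.resolve_left hI
    obtain ⟨n, hn⟩ := exists_homogeneousLengthLE hgr x
    exact ⟨n, x, hxI, hx, hn⟩
  obtain ⟨x, hxI, hx, hxn⟩ := Nat.find_spec hex
  exact ⟨_, x, hxI, hx, hxn, fun w hwI k hk hwk =>
    by_contra fun hw => Nat.find_min hex hk ⟨w, hwI, hw, hwk⟩⟩

section Minimal

variable [DecidableEq (GMor G)] [Decomposition 𝓡] {I : AddSubgroup R} {n : ℕ} {x : R}

theorem mem_capCent_of_minimal (hgr : IsGroupoidGrading 𝓡) (hI : IsRingIdeal I) (hxI : x ∈ I)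
    (hxn : HomogeneousLengthLE 𝓡 n x)
    (hmin : ∀ w ∈ I, ∀ k < n, HomogeneousLengthLE 𝓡 k w → w = 0) {a : G}
    (ha : (decompose 𝓡 x ⟨a, a, 𝟙 a⟩ : R) ≠ 0) : x ∈ capCent 𝓡 := by
  classical
  rintro e z ⟨hz, hzc⟩
  obtain ⟨S, hSn, hS, rfl⟩ := hxn
  obtain ⟨y₀, hy₀S, hy₀⟩ := exists_mem_decompose_ne_zero 𝓡 ha
  obtain ⟨m, hy₀m⟩ := hS y₀ hy₀S
  have hy₀a : y₀ ∈ 𝓡 ⟨a, a, 𝟙 a⟩ := mem_of_decompose_ne_zero 𝓡 hy₀m hy₀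
  have hlen := homogeneousLengthLE_commutator hgr hS hy₀S hz (commute_of_mem_id hgr hy₀a hz hzc)
  refine sub_eq_zero.1 (hmin _ (sub_mem (hI z _ hxI).2 (hI z _ hxI).1) _ ?_ hlen)
  exact (Multiset.card_erase_lt_of_mem hy₀S).trans_le hSn

theorem exists_homogeneous_mem_of_leftNonDeg (hgr : IsGroupoidGrading 𝓡)
    (hcent : capCent 𝓡 ⊆ (grZero 𝓡 : Set R)) (hL : LeftNonDeg 𝓡) (hI : IsRingIdeal I)
    (hxI : x ∈ I) (hx : x ≠ 0) (hxn : HomogeneousLengthLE 𝓡 n x)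
    (hmin : ∀ w ∈ I, ∀ k < n, HomogeneousLengthLE 𝓡 k w → w = 0) :
    ∃ m, ∃ v ∈ I, v ∈ 𝓡 m ∧ v ≠ 0 := by
  obtain ⟨⟨a, b, g⟩, hg⟩ := exists_decompose_ne_zero 𝓡 hx
  obtain ⟨s, hs, hsg⟩ := hL a b g _ (decompose 𝓡 x _).2 hg
  have hsx : (decompose 𝓡 (s * x) ⟨a, a, 𝟙 a⟩ : R) = s * decompose 𝓡 x ⟨a, b, g⟩ := by
    have h := decompose_mul_left hgr hs g x
    rwa [Groupoid.comp_inv] at h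
  have hsx₀ : s * x ∈ grZero 𝓡 := hcent <| mem_capCent_of_minimal hgr hI (hI s x hxI).1
    (hxn.mul_left hgr ⟨_, hs⟩) hmin (hsx ▸ hsg)
  obtain ⟨t, ht, hts⟩ := hL a a (𝟙 a) _ (decompose 𝓡 (s * x) _).2 (hsx ▸ hsg)
  simp only [Groupoid.inv_eq_inv, IsIso.inv_id] at ht
  refine ⟨_, t * (s * x), (hI t _ (hI s x hxI).1).1, mul_mem_of_mem_grZero_right hgr ht hsx₀,
    fun h => hts ?_⟩
  simpa [h] using (decompose_mul_left hgr ht (𝟙 a) (s * x)).symm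

theorem exists_homogeneous_mem_of_rightNonDeg (hgr : IsGroupoidGrading 𝓡)
    (hcent : capCent 𝓡 ⊆ (grZero 𝓡 : Set R)) (hR : RightNonDeg 𝓡) (hI : IsRingIdeal I)
    (hxI : x ∈ I) (hx : x ≠ 0) (hxn : HomogeneousLengthLE 𝓡 n x)
    (hmin : ∀ w ∈ I, ∀ k < n, HomogeneousLengthLE 𝓡 k w → w = 0) :
    ∃ m, ∃ v ∈ I, v ∈ 𝓡 m ∧ v ≠ 0 := by
  obtain ⟨⟨a, b, g⟩, hg⟩ := exists_decompose_ne_zero 𝓡 hx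
  obtain ⟨s, hs, hsg⟩ := hR a b g _ (decompose 𝓡 x _).2 hg
  have hxs : (decompose 𝓡 (x * s) ⟨b, b, 𝟙 b⟩ : R) = decompose 𝓡 x ⟨a, b, g⟩ * s := by
    have h := decompose_mul_right hgr hs g x
    rwa [Groupoid.inv_comp] at h
  have hxs₀ : x * s ∈ grZero 𝓡 := hcent <| mem_capCent_of_minimal hgr hI (hI s x hxI).2
    (hxn.mul_right hgr ⟨_, hs⟩) hmin (hxs ▸ hsg)
  obtain ⟨t, ht, hts⟩ := hR b b (𝟙 b) _ (decompose 𝓡 (x * s) _).2 (hxs ▸ hsg)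
  simp only [Groupoid.inv_eq_inv, IsIso.inv_id] at ht
  refine ⟨_, x * s * t, (hI t _ (hI s x hxI).2).2, mul_mem_of_mem_grZero_left hgr hxs₀ ht,
    fun h => hts ?_⟩
  simpa [h] using (decompose_mul_right hgr ht (𝟙 b) (x * s)).symm

end Minimal

/-- Let `G` be a groupoid and `R` a `G`-graded ring that is graded
simple and whose grading is left (or right) non-degenerate. If
`∩_{e ∈ G₀} C_R(Z(R_e)) ⊆ R₀`, then `R` is a simple ring. -/
theorem stmt2 {G : Type*} [Groupoid G] {R : Type*} [NonUnitalRing R]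
    (𝓡 : GMor G → AddSubgroup R) (hgr : IsGroupoidGrading 𝓡)
    (hgs : GradedSimple 𝓡)
    (hnd : LeftNonDeg 𝓡 ∨ RightNonDeg 𝓡)
    (hcent : capCent 𝓡 ⊆ (grZero 𝓡 : Set R)) :
    RingSimple R := by
  classical
  let := hgr.isInternal.chooseDecomposition
  intro I hI
  refine or_iff_not_imp_left.2 fun hbot => ?_
  obtain ⟨n, x, hxI, hx, hxn, hmin⟩ := exists_minimal_homogeneousLengthLE hgr hbot
  obtain ⟨m, v, hvI, hvm, hv⟩ := hnd.elim
    (fun hL => exists_homogeneous_mem_of_leftNonDeg hgr hcent hL hI hxI hx hxn hmin)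
    (fun hR => exists_homogeneous_mem_of_rightNonDeg hgr hcent hR hI hxI hx hxn hmin)
  exact eq_top_of_homogeneous_mem hgr hgs hI hvI hvm hv

end PaperGrpd
end

section
/- Let S be an inverse semigroup and let R be a system over S. Then R is left s-unital epsilon-strong if and only if R is symmetric and for every s ∈ S the ring R_s R_{s*} is left s-unital. Analogously, R is right s-unital epsilon-strong if and only if R is symmetric and for every s ∈ S the ring R_{s*} R_s is right s-unital. -/
open Pointwise

namespace PaperSys

variable {S R : Type*} [Semigroup S] [NonUnitalRing R]

/-
An element `r ∈ R_s` with `ε r = r` for `ε ∈ R_s R_{s*}` lies in `R_s R_{s*} R_s`, which gives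
symmetry; conversely symmetry writes `R_s` as `R_s R_{s*} · R_s`. In both directions the
s-unitality is then transported by Tominaga's argument: if every element of a module `M` over a
ring `D` has a left unit in `D`, then so does every finite family, because a unit `b₀` of earlier
elements and a unit `f` of `m - b₀ m` combine to `b₀ + f - f b₀`, a unit of `m` that still fixes
everything `b₀` fixes.
-/

lemma mul_mem_sumProd {A B : AddSubgroup R} {a b : R} (ha : a ∈ A) (hb : b ∈ B) :
    a * b ∈ sumProd A B :=
  AddSubgroup.subset_closure (Set.mul_mem_mul ha hb)

lemma sumProd_le {A B C : AddSubgroup R} (h : ∀ a ∈ A, ∀ b ∈ B, a * b ∈ C) :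
    sumProd A B ≤ C := by
  rw [sumProd, AddSubgroup.closure_le]
  rintro _ ⟨a, ha, b, hb, rfl⟩
  exact h a ha b hb

lemma sumProd_mul_mem {A B C : AddSubgroup R} {u x : R}
    (h : ∀ a ∈ A, ∀ b ∈ B, a * b * x ∈ C) (hu : u ∈ sumProd A B) : u * x ∈ C :=
  sumProd_le (C := C.comap (AddMonoidHom.mulRight x)) h hu

lemma mul_sumProd_mem {A B C : AddSubgroup R} {u x : R}
    (h : ∀ a ∈ A, ∀ b ∈ B, x * (a * b) ∈ C) (hu : u ∈ sumProd A B) : x * u ∈ C :=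
  sumProd_le (C := C.comap (AddMonoidHom.mulLeft x)) h hu

lemma sumProd_assoc (A B C : AddSubgroup R) :
    sumProd (sumProd A B) C = sumProd A (sumProd B C) := by
  refine le_antisymm (sumProd_le fun u hu c hc => ?_) (sumProd_le fun a ha v hv => ?_)
  · exact sumProd_mul_mem (fun a ha b hb => mul_assoc a b c ▸
      mul_mem_sumProd ha (mul_mem_sumProd hb hc)) hu
  · exact mul_sumProd_mem (fun b hb c hc => (mul_assoc a b c).symm ▸
      mul_mem_sumProd (mul_mem_sumProd ha hb) hc) hv

section Tominaga

def IsLeftSUnital (D M : AddSubgroup R) : Prop :=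
  ∀ m ∈ M, ∃ e ∈ D, e * m = m

def IsRightSUnital (D M : AddSubgroup R) : Prop :=
  ∀ m ∈ M, ∃ e ∈ D, m * e = m

variable {D M : AddSubgroup R}

lemma IsLeftSUnital.exists_extension (hDD : ∀ d ∈ D, ∀ d' ∈ D, d * d' ∈ D)
    (hDM : ∀ d ∈ D, ∀ m ∈ M, d * m ∈ M) (hM : IsLeftSUnital D M) {m b₀ : R} (hm : m ∈ M)
    (hb₀ : b₀ ∈ D) : ∃ b ∈ D, b * m = m ∧ ∀ x, b₀ * x = x → b * x = x := by
  obtain ⟨f, hf, hfm⟩ := hM (m - b₀ * m) (sub_mem hm (hDM b₀ hb₀ m hm))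
  have hexpand : ∀ x, (b₀ + f - f * b₀) * x = b₀ * x + f * (x - b₀ * x) := fun x => by
    simp only [add_mul, sub_mul, mul_sub, mul_assoc]; abel
  refine ⟨b₀ + f - f * b₀, sub_mem (add_mem hb₀ hf) (hDD f hf b₀ hb₀), ?_, fun x hx => ?_⟩
  · rw [hexpand, hfm, add_sub_cancel]
  · rw [hexpand, hx, sub_self, mul_zero, add_zero]

lemma IsRightSUnital.exists_extension (hDD : ∀ d ∈ D, ∀ d' ∈ D, d * d' ∈ D)
    (hMD : ∀ m ∈ M, ∀ d ∈ D, m * d ∈ M) (hM : IsRightSUnital D M) {m b₀ : R} (hm : m ∈ M)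
    (hb₀ : b₀ ∈ D) : ∃ b ∈ D, m * b = m ∧ ∀ x, x * b₀ = x → x * b = x := by
  obtain ⟨f, hf, hfm⟩ := hM (m - m * b₀) (sub_mem hm (hMD m hm b₀ hb₀))
  have hexpand : ∀ x, x * (b₀ + f - b₀ * f) = x * b₀ + (x - x * b₀) * f := fun x => by
    simp only [mul_add, mul_sub, sub_mul, mul_assoc]; abel
  refine ⟨b₀ + f - b₀ * f, sub_mem (add_mem hb₀ hf) (hDD b₀ hb₀ f hf), ?_, fun x hx => ?_⟩
  · rw [hexpand, hfm, add_sub_cancel]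
  · rw [hexpand, hx, sub_self, zero_mul, add_zero]

lemma isLeftSUnital_sumProd (hDD : ∀ d ∈ D, ∀ d' ∈ D, d * d' ∈ D)
    (hDM : ∀ d ∈ D, ∀ m ∈ M, d * m ∈ M) (hM : IsLeftSUnital D M) (B : AddSubgroup R) :
    IsLeftSUnital D (sumProd M B) := by
  suffices h : ∀ u ∈ sumProd M B, ∀ b₀ ∈ D,
      ∃ b ∈ D, b * u = u ∧ ∀ x, b₀ * x = x → b * x = x by
    intro u hu
    obtain ⟨b, hb, hbu, -⟩ := h u hu 0 (zero_mem D)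
    exact ⟨b, hb, hbu⟩
  intro u hu
  induction hu using AddSubgroup.closure_induction with
  | mem _ hmy =>
    obtain ⟨m, hm, y, -, rfl⟩ := hmy
    intro b₀ hb₀
    obtain ⟨b, hb, hbm, hbext⟩ := hM.exists_extension hDD hDM hm hb₀
    exact ⟨b, hb, by rw [← mul_assoc, hbm], hbext⟩
  | zero => exact fun b₀ hb₀ => ⟨b₀, hb₀, mul_zero b₀, fun x hx => hx⟩
  | add x y _ _ hx hy =>
    intro b₀ hb₀
    obtain ⟨b₁, hb₁, hb₁x, hb₁ext⟩ := hx b₀ hb₀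
    obtain ⟨b₂, hb₂, hb₂y, hb₂ext⟩ := hy b₁ hb₁
    exact ⟨b₂, hb₂, by rw [mul_add, hb₂y, hb₂ext x hb₁x], fun z hz => hb₂ext z (hb₁ext z hz)⟩
  | neg x _ hx =>
    intro b₀ hb₀
    obtain ⟨b, hb, hbx, hbext⟩ := hx b₀ hb₀
    exact ⟨b, hb, by rw [mul_neg, hbx], hbext⟩

lemma isRightSUnital_sumProd (hDD : ∀ d ∈ D, ∀ d' ∈ D, d * d' ∈ D)
    (hMD : ∀ m ∈ M, ∀ d ∈ D, m * d ∈ M) (hM : IsRightSUnital D M) (B : AddSubgroup R) :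
    IsRightSUnital D (sumProd B M) := by
  suffices h : ∀ u ∈ sumProd B M, ∀ b₀ ∈ D,
      ∃ b ∈ D, u * b = u ∧ ∀ x, x * b₀ = x → x * b = x by
    intro u hu
    obtain ⟨b, hb, hub, -⟩ := h u hu 0 (zero_mem D)
    exact ⟨b, hb, hub⟩
  intro u hu
  induction hu using AddSubgroup.closure_induction with
  | mem _ hym =>
    obtain ⟨y, -, m, hm, rfl⟩ := hym
    intro b₀ hb₀
    obtain ⟨b, hb, hmb, hbext⟩ := hM.exists_extension hDD hMD hm hb₀
    exact ⟨b, hb, by rw [mul_assoc, hmb], hbext⟩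
  | zero => exact fun b₀ hb₀ => ⟨b₀, hb₀, zero_mul b₀, fun x hx => hx⟩
  | add x y _ _ hx hy =>
    intro b₀ hb₀
    obtain ⟨b₁, hb₁, hxb₁, hb₁ext⟩ := hx b₀ hb₀
    obtain ⟨b₂, hb₂, hyb₂, hb₂ext⟩ := hy b₁ hb₁
    exact ⟨b₂, hb₂, by rw [add_mul, hyb₂, hb₂ext x hxb₁], fun z hz => hb₂ext z (hb₁ext z hz)⟩
  | neg x _ hx =>
    intro b₀ hb₀
    obtain ⟨b, hb, hxb, hbext⟩ := hx b₀ hb₀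
    exact ⟨b, hb, by rw [neg_mul, hxb], hbext⟩

end Tominaga

section EpsilonStrong

variable {A B : AddSubgroup R}

lemma mul_mem_of_mem_sumProd_left (hABA : ∀ a ∈ A, ∀ b ∈ B, ∀ a' ∈ A, a * b * a' ∈ A)
    {u a : R} (hu : u ∈ sumProd A B) (ha : a ∈ A) : u * a ∈ A :=
  sumProd_mul_mem (fun a₁ ha₁ b hb => hABA a₁ ha₁ b hb a ha) hu

lemma mul_mem_of_mem_sumProd_right (hABA : ∀ a ∈ A, ∀ b ∈ B, ∀ a' ∈ A, a * b * a' ∈ A)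
    {a u : R} (ha : a ∈ A) (hu : u ∈ sumProd B A) : a * u ∈ A :=
  mul_sumProd_mem (fun b hb a' ha' => mul_assoc a b a' ▸ hABA a ha b hb a' ha') hu

lemma mul_mem_sumProd_self_left (hABA : ∀ a ∈ A, ∀ b ∈ B, ∀ a' ∈ A, a * b * a' ∈ A) :
    ∀ u ∈ sumProd A B, ∀ v ∈ sumProd A B, u * v ∈ sumProd A B := fun u hu _ hv =>
  mul_sumProd_mem (fun a ha b hb => (mul_assoc u a b).symm ▸
    mul_mem_sumProd (mul_mem_of_mem_sumProd_left hABA hu ha) hb) hv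

lemma mul_mem_sumProd_self_right (hABA : ∀ a ∈ A, ∀ b ∈ B, ∀ a' ∈ A, a * b * a' ∈ A) :
    ∀ u ∈ sumProd B A, ∀ v ∈ sumProd B A, u * v ∈ sumProd B A := fun _ hu v hv =>
  sumProd_mul_mem (fun b hb a ha => (mul_assoc b a v).symm ▸
    mul_mem_sumProd hb (mul_mem_of_mem_sumProd_right hABA ha hv)) hu

lemma sumProd_sumProd_le (hABA : ∀ a ∈ A, ∀ b ∈ B, ∀ a' ∈ A, a * b * a' ∈ A) :
    sumProd (sumProd A B) A ≤ A :=
  sumProd_le fun _ hu _ ha => mul_mem_of_mem_sumProd_left hABA hu ha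

theorem isLeftSUnital_iff (hABA : ∀ a ∈ A, ∀ b ∈ B, ∀ a' ∈ A, a * b * a' ∈ A) :
    IsLeftSUnital (sumProd A B) A ↔
      sumProd (sumProd A B) A = A ∧ IsLeftSUnital (sumProd A B) (sumProd A B) := by
  have hDD := mul_mem_sumProd_self_left hABA
  constructor
  · intro hA
    refine ⟨le_antisymm (sumProd_sumProd_le hABA) fun r hr => ?_,
      isLeftSUnital_sumProd hDD (fun _ hu _ ha => mul_mem_of_mem_sumProd_left hABA hu ha) hA B⟩
    obtain ⟨ε, hε, hεr⟩ := hA r hr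
    exact hεr ▸ mul_mem_sumProd hε hr
  · rintro ⟨hsymm, hD⟩ r hr
    rw [← hsymm] at hr
    exact isLeftSUnital_sumProd hDD hDD hD A r hr

theorem isRightSUnital_iff (hABA : ∀ a ∈ A, ∀ b ∈ B, ∀ a' ∈ A, a * b * a' ∈ A) :
    IsRightSUnital (sumProd B A) A ↔
      sumProd (sumProd A B) A = A ∧ IsRightSUnital (sumProd B A) (sumProd B A) := by
  have hDD := mul_mem_sumProd_self_right hABA
  rw [sumProd_assoc]
  constructor
  · intro hA
    refine ⟨le_antisymm (sumProd_assoc A B A ▸ sumProd_sumProd_le hABA) fun r hr => ?_,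
      isRightSUnital_sumProd hDD (fun _ ha _ hu => mul_mem_of_mem_sumProd_right hABA ha hu) hA B⟩
    obtain ⟨ε, hε, hrε⟩ := hA r hr
    exact hrε ▸ mul_mem_sumProd hr hε
  · rintro ⟨hsymm, hD⟩ r hr
    rw [← hsymm] at hr
    exact isRightSUnital_sumProd hDD hDD hD A r hr

end EpsilonStrong

/-- Let `S` be an inverse semigroup and `R` a system over `S`.
Then `R` is left s-unital epsilon-strong iff `R` is symmetric and for every `s`
the ring `R_s R_{s*}` is left s-unital; and `R` is right s-unital epsilon-strong
iff `R` is symmetric and for every `s` the ring `R_{s*} R_s` is right s-unital. -/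
theorem stmt5 {S R : Type*} [Semigroup S] [NonUnitalRing R]
    (star : S → S) (hstar : IsInverseStar star)
    (𝓡 : S → AddSubgroup R) (hsys : IsSystem 𝓡) :
    (LeftSEps star 𝓡 ↔ IsSymmetricSys star 𝓡 ∧
      ∀ s : S, ∀ a ∈ sumProd (𝓡 s) (𝓡 (star s)),
        ∃ b ∈ sumProd (𝓡 s) (𝓡 (star s)), b * a = a) ∧
    (RightSEps star 𝓡 ↔ IsSymmetricSys star 𝓡 ∧
      ∀ s : S, ∀ a ∈ sumProd (𝓡 (star s)) (𝓡 s),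
        ∃ c ∈ sumProd (𝓡 (star s)) (𝓡 s), a * c = a) := by
  have hABA : ∀ s, ∀ a ∈ 𝓡 s, ∀ b ∈ 𝓡 (star s), ∀ a' ∈ 𝓡 s, a * b * a' ∈ 𝓡 s :=
    fun s a ha b hb a' ha' => hstar.1 s ▸ hsys.2 _ _ _ (hsys.2 _ _ a ha b hb) a' ha'
  exact ⟨(forall_congr' fun s => isLeftSUnital_iff (hABA s)).trans forall_and,
    (forall_congr' fun s => isRightSUnital_iff (hABA s)).trans forall_and⟩

end PaperSys
end

section
/- Let G be a groupoid and let R be a G-graded ring whose grading is left (or right) non-degenerate. Then the ring extension R / ∩_{e∈G_0} C_R(Z(R_e)) has the ideal intersection property, i.e. every nonzero ideal of R has nonzero intersection with ∩_{e∈G_0} C_R(Z(R_e)). -/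
/-!
Choose a set `T` of degrees of least size such that some nonzero `x ∈ I` lies in
`⨆ m ∈ T, 𝓡 m`; minimality says that `I` is disjoint from `⨆ m ∈ T', 𝓡 m` whenever
`|T'| < |T|`. Then `x` has a nonzero component `x_k` in some degree `k : a ⟶ b` of `T`, and
non-degeneracy gives `s` of degree `k⁻¹` with `s x_k ≠ 0` (or `x_k s ≠ 0`). The element
`y = s x` of `I` is supported on at most `|T|` degrees, and its component in the unit degree
`1_a` is `s x_k ≠ 0`, because `k` is the only degree that `k⁻¹` translates to `1_a`.
For `z` central in some `R_e`, the commutator `y z - z y` kills that unit component and keeps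
every other component in its degree, so it lies in `I` with strictly smaller support and
vanishes.
-/

open Pointwise CategoryTheory

namespace PaperGrpd

variable {G : Type*} [Groupoid G] {R : Type*} [NonUnitalRing R]

section Lattice

variable {M N : Type*} [AddCommGroup M] [AddCommGroup N] {ι κ : Type*}

lemma exists_finset_mem_iSup {A : ι → AddSubgroup M} (hA : ⨆ i, A i = ⊤) (x : M) :
    ∃ T : Finset ι, x ∈ ⨆ i ∈ T, A i := by
  have hdir : Directed (· ≤ ·) fun T : Finset ι => ⨆ i ∈ T, A i :=
    Monotone.directed_le fun _ _ h => biSup_mono fun _ hi => Finset.mem_of_subset h hi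
  have hx : x ∈ ⨆ T : Finset ι, ⨆ i ∈ T, A i := by
    rw [← iSup_eq_iSup_finset, hA]
    exact AddSubgroup.mem_top x
  exact (AddSubgroup.mem_iSup_of_directed hdir).1 hx

lemma exists_finset_minimal_not_disjoint {A : ι → AddSubgroup M} (hA : ⨆ i, A i = ⊤)
    {I : AddSubgroup M} (hI : I ≠ ⊥) :
    ∃ T : Finset ι, ¬Disjoint I (⨆ i ∈ T, A i) ∧
      ∀ T' : Finset ι, T'.card < T.card → Disjoint I (⨆ i ∈ T', A i) := by
  have hne : {T : Finset ι | ¬Disjoint I (⨆ i ∈ T, A i)}.Nonempty := by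
    obtain ⟨x, hxI, hx0⟩ := I.bot_or_exists_ne_zero.resolve_left hI
    obtain ⟨T, hxT⟩ := exists_finset_mem_iSup hA x
    exact ⟨T, fun hd => hx0 (AddSubgroup.disjoint_def.1 hd hxI hxT)⟩
  obtain ⟨T, hT, hmin⟩ := (measure Finset.card).wf.has_min _ hne
  exact ⟨T, hT, fun T' hT' => not_not.1 fun h => hmin T' h hT'⟩

lemma exists_component_ne_zero [DecidableEq ι] {A : ι → AddSubgroup M} {I : AddSubgroup M}
    {T : Finset ι} (hT : ¬Disjoint I (⨆ i ∈ T, A i))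
    (hmin : ∀ T' : Finset ι, T'.card < T.card → Disjoint I (⨆ i ∈ T', A i)) :
    ∃ k ∈ T, ∃ xk ∈ A k, xk ≠ 0 ∧ ∃ x' ∈ ⨆ i ∈ T.erase k, A i, xk + x' ∈ I := by
  obtain ⟨x, hxI, hxT, hx0⟩ : ∃ x ∈ I, x ∈ ⨆ i ∈ T, A i ∧ x ≠ 0 := by
    simpa [AddSubgroup.disjoint_def] using hT
  obtain ⟨k, hk⟩ : T.Nonempty :=
    Finset.nonempty_iff_ne_empty.2 fun h => hx0 (by simpa [h] using hxT)
  rw [← Finset.insert_erase hk, Finset.iSup_insert] at hxT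
  obtain ⟨xk, hxk, x', hx', rfl⟩ := AddSubgroup.mem_sup.1 hxT
  refine ⟨k, hk, xk, hxk, ?_, x', hx', hxI⟩
  rintro rfl
  rw [zero_add] at hxI hx0
  exact hx0 (AddSubgroup.disjoint_def.1 (hmin _ (Finset.card_erase_lt_of_mem hk)) hxI hx')

lemma add_ne_zero_of_iSupIndep {A : ι → AddSubgroup M} (hA : iSupIndep A) {T : Finset ι} {k : ι}
    (hk : k ∉ T) {y₀ y' : M} (hy₀ : y₀ ∈ A k) (hy₀0 : y₀ ≠ 0) (hy' : y' ∈ ⨆ i ∈ T, A i) :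
    y₀ + y' ≠ 0 := by
  intro h
  have hy₀' : y₀ ∈ ⨆ i ∈ (T : Set ι), A i := by
    rw [eq_neg_of_add_eq_zero_left h]
    exact neg_mem hy'
  exact hy₀0 (AddSubgroup.disjoint_def.1 (hA.disjoint_biSup hk) hy₀ hy₀')

lemma map_mem_biSup {A : ι → AddSubgroup M} {B : κ → AddSubgroup N} (f : M →+ N)
    {T : Finset ι} {T' : Finset κ} (h : ∀ i ∈ T, ∀ r ∈ A i, f r ∈ ⨆ j ∈ T', B j) {x : M}
    (hx : x ∈ ⨆ i ∈ T, A i) : f x ∈ ⨆ j ∈ T', B j :=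
  (iSup₂_le fun i hi r hr => h i hi r hr : (⨆ i ∈ T, A i) ≤ (⨆ j ∈ T', B j).comap f) hx

lemma exists_finset_card_le_map_mem_biSup [DecidableEq κ] {A : ι → AddSubgroup M}
    {B : κ → AddSubgroup N} (f : M →+ N) {T : Finset ι} {j₀ : κ}
    (h : ∀ i ∈ T, ∃ S : Finset κ, S.card ≤ 1 ∧ j₀ ∉ S ∧ ∀ r ∈ A i, f r ∈ ⨆ j ∈ S, B j) :
    ∃ T' : Finset κ, T'.card ≤ T.card ∧ j₀ ∉ T' ∧
      ∀ x ∈ ⨆ i ∈ T, A i, f x ∈ ⨆ j ∈ T', B j := by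
  choose! S hS1 hS0 hSf using h
  refine ⟨T.biUnion S, ?_, ?_, fun x => map_mem_biSup f fun i hi r hr => ?_⟩
  · simpa using Finset.card_biUnion_le_card_mul T S 1 hS1
  · simp only [Finset.mem_biUnion, not_exists, not_and]
    exact hS0
  · have hle : (⨆ j ∈ S i, B j) ≤ ⨆ j ∈ T.biUnion S, B j :=
      biSup_mono fun j hj => Finset.mem_biUnion.2 ⟨i, hi, hj⟩
    exact hle (hSf i hi r hr)

end Lattice

section GradedRing

variable {𝓡 : GMor G → AddSubgroup R}

namespace IsGroupoidGrading

lemma mul_mem_of_mem_id_right (hgr : IsGroupoidGrading 𝓡) {m : GMor G} {e : G} {r z : R}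
    (hr : r ∈ 𝓡 m) (hz : z ∈ 𝓡 ⟨e, e, 𝟙 e⟩) : r * z ∈ 𝓡 m := by
  obtain ⟨c, d, j⟩ := m
  by_cases h : c = e
  · subst h
    simpa using hgr.2.2.1 c c d j (𝟙 c) r hr z hz
  · rw [hgr.2.2.2 _ _ h r hr z hz]
    exact zero_mem _

lemma mul_mem_of_mem_id_left (hgr : IsGroupoidGrading 𝓡) {m : GMor G} {e : G} {r z : R}
    (hr : r ∈ 𝓡 m) (hz : z ∈ 𝓡 ⟨e, e, 𝟙 e⟩) : z * r ∈ 𝓡 m := by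
  obtain ⟨c, d, j⟩ := m
  by_cases h : d = e
  · subst h
    simpa using hgr.2.2.1 c d d (𝟙 d) j z hz r hr
  · rw [hgr.2.2.2 _ ⟨c, d, j⟩ (Ne.symm h) z hz r hr]
    exact zero_mem _

lemma commute_of_mem_id (hgr : IsGroupoidGrading 𝓡) {a e : G} {y z : R}
    (hy : y ∈ 𝓡 ⟨a, a, 𝟙 a⟩) (hz : z ∈ 𝓡 ⟨e, e, 𝟙 e⟩)
    (hzc : ∀ w ∈ 𝓡 ⟨e, e, 𝟙 e⟩, z * w = w * z) : y * z = z * y := by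
  by_cases h : a = e
  · subst h
    exact (hzc y hy).symm
  · rw [hgr.2.2.2 _ _ h y hy z hz, hgr.2.2.2 _ _ (Ne.symm h) z hz y hy]

lemma add_mem_capCent (hgr : IsGroupoidGrading 𝓡) {I : AddSubgroup R} (hI : IsRingIdeal I)
    {T : Finset (GMor G)} (hT : Disjoint I (⨆ m ∈ T, 𝓡 m)) {a : G} {y₀ y' : R}
    (hy₀ : y₀ ∈ 𝓡 ⟨a, a, 𝟙 a⟩) (hy' : y' ∈ ⨆ m ∈ T, 𝓡 m) (hy : y₀ + y' ∈ I) :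
    y₀ + y' ∈ capCent 𝓡 := by
  rintro e z ⟨hz, hzc⟩
  have hcomm : (y₀ + y') * z - z * (y₀ + y') = y' * z - z * y' := by
    rw [add_mul, mul_add, hgr.commute_of_mem_id hy₀ hz hzc]
    abel
  have hI' : (y₀ + y') * z - z * (y₀ + y') ∈ I := sub_mem (hI z _ hy).2 (hI z _ hy).1
  have hT' : y' * z - z * y' ∈ ⨆ m ∈ T, 𝓡 m :=
    map_mem_biSup (AddMonoidHom.mulRight z - AddMonoidHom.mulLeft z)
      (fun m hm r hr => le_biSup 𝓡 hm <|
        sub_mem (hgr.mul_mem_of_mem_id_right hr hz) (hgr.mul_mem_of_mem_id_left hr hz)) hy'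
  rw [← hcomm] at hT'
  exact sub_eq_zero.1 (AddSubgroup.disjoint_def.1 hT hI' hT')

lemma exists_ne_zero_mem_capCent (hgr : IsGroupoidGrading 𝓡) {I : AddSubgroup R}
    (hI : IsRingIdeal I) {T : Finset (GMor G)} (hT : Disjoint I (⨆ m ∈ T, 𝓡 m)) {a : G}
    (ha : ⟨a, a, 𝟙 a⟩ ∉ T) {y₀ y' : R} (hy₀ : y₀ ∈ 𝓡 ⟨a, a, 𝟙 a⟩) (hy₀0 : y₀ ≠ 0)
    (hy' : y' ∈ ⨆ m ∈ T, 𝓡 m) (hy : y₀ + y' ∈ I) :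
    ∃ x : R, x ≠ 0 ∧ x ∈ I ∧ x ∈ capCent 𝓡 :=
  ⟨y₀ + y', add_ne_zero_of_iSupIndep hgr.2.1 ha hy₀ hy₀0 hy', hy,
    hgr.add_mem_capCent hI hT hy₀ hy' hy⟩

lemma exists_finset_mul_left_mem (hgr : IsGroupoidGrading 𝓡) {a b : G} (k : a ⟶ b) {s : R}
    (hs : s ∈ 𝓡 ⟨b, a, Groupoid.inv k⟩) {m : GMor G} (hm : m ≠ ⟨a, b, k⟩) :
    ∃ S : Finset (GMor G), S.card ≤ 1 ∧ ⟨a, a, 𝟙 a⟩ ∉ S ∧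
      ∀ r ∈ 𝓡 m, s * r ∈ ⨆ m' ∈ S, 𝓡 m' := by
  obtain ⟨c, d, j⟩ := m
  by_cases hd : d = b
  · subst hd
    refine ⟨{⟨c, a, j ≫ Groupoid.inv k⟩}, (Finset.card_singleton _).le, ?_, fun r hr => ?_⟩
    · rw [Finset.mem_singleton]
      intro h
      obtain ⟨rfl, h⟩ := by simpa using h
      simp only [heq_eq_eq, Sigma.mk.inj_iff, true_and] at h
      obtain rfl := (comp_inv_eq_id k).1 h.symm
      exact hm rfl
    · rw [Finset.iSup_singleton]
      exact hgr.2.2.1 c d a (Groupoid.inv k) j s hs r hr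
  · refine ⟨∅, by simp, by simp, fun r hr => ?_⟩
    rw [hgr.2.2.2 ⟨b, a, Groupoid.inv k⟩ ⟨c, d, j⟩ (Ne.symm hd) s hs r hr]
    exact zero_mem _

lemma exists_finset_mul_right_mem (hgr : IsGroupoidGrading 𝓡) {a b : G} (k : a ⟶ b) {s : R}
    (hs : s ∈ 𝓡 ⟨b, a, Groupoid.inv k⟩) {m : GMor G} (hm : m ≠ ⟨a, b, k⟩) :
    ∃ S : Finset (GMor G), S.card ≤ 1 ∧ ⟨b, b, 𝟙 b⟩ ∉ S ∧
      ∀ r ∈ 𝓡 m, r * s ∈ ⨆ m' ∈ S, 𝓡 m' := by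
  obtain ⟨c, d, j⟩ := m
  by_cases hc : c = a
  · subst hc
    refine ⟨{⟨b, d, Groupoid.inv k ≫ j⟩}, (Finset.card_singleton _).le, ?_, fun r hr => ?_⟩
    · rw [Finset.mem_singleton]
      intro h
      obtain ⟨rfl, h⟩ := by simpa using h
      simp only [heq_eq_eq] at h
      obtain rfl := (inv_comp_eq_id k).1 h.symm
      exact hm rfl
    · rw [Finset.iSup_singleton]
      exact hgr.2.2.1 b c d j (Groupoid.inv k) r hr s hs
  · refine ⟨∅, by simp, by simp, fun r hr => ?_⟩
    rw [hgr.2.2.2 ⟨c, d, j⟩ ⟨b, a, Groupoid.inv k⟩ hc r hr s hs]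
    exact zero_mem _

end IsGroupoidGrading

end GradedRing

/-- Let `G` be a groupoid and `R` a `G`-graded ring whose grading
is left (or right) non-degenerate. Then the ring extension
`R / ∩_{e ∈ G₀} C_R(Z(R_e))` has the ideal intersection property: every nonzero ideal
of `R` has nonzero intersection with `∩_{e ∈ G₀} C_R(Z(R_e))`. -/
theorem stmt11 {G : Type*} [Groupoid G] {R : Type*} [NonUnitalRing R]
    (𝓡 : GMor G → AddSubgroup R) (hgr : IsGroupoidGrading 𝓡)
    (hnd : LeftNonDeg 𝓡 ∨ RightNonDeg 𝓡) :
    ∀ I : AddSubgroup R, IsRingIdeal I → I ≠ ⊥ →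
      ∃ x : R, x ≠ 0 ∧ x ∈ I ∧ x ∈ capCent 𝓡 := by
  classical
  intro I hI hI0
  obtain ⟨T, hT, hmin⟩ := exists_finset_minimal_not_disjoint hgr.1 hI0
  obtain ⟨⟨a, b, k⟩, hk, xk, hxk, hxk0, x', hx', hxI⟩ := exists_component_ne_zero hT hmin
  have hmin' {T' : Finset (GMor G)} (hT' : T'.card ≤ (T.erase ⟨a, b, k⟩).card) :
      Disjoint I (⨆ m ∈ T', 𝓡 m) :=
    hmin T' (hT'.trans_lt (Finset.card_erase_lt_of_mem hk))
  rcases hnd with hL | hR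
  · obtain ⟨s, hs, hsxk⟩ := hL a b k xk hxk hxk0
    obtain ⟨T', hT'card, haT', hT'⟩ := exists_finset_card_le_map_mem_biSup
      (AddMonoidHom.mulLeft s) fun _ hm =>
        hgr.exists_finset_mul_left_mem k hs (Finset.ne_of_mem_erase hm)
    refine hgr.exists_ne_zero_mem_capCent hI (hmin' hT'card) haT' ?_ hsxk (hT' x' hx') ?_
    · simpa using hgr.2.2.1 a b a (Groupoid.inv k) k s hs xk hxk
    · simpa [mul_add] using (hI s _ hxI).1
  · obtain ⟨s, hs, hxks⟩ := hR a b k xk hxk hxk0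
    obtain ⟨T', hT'card, hbT', hT'⟩ := exists_finset_card_le_map_mem_biSup
      (AddMonoidHom.mulRight s) fun _ hm =>
        hgr.exists_finset_mul_right_mem k hs (Finset.ne_of_mem_erase hm)
    refine hgr.exists_ne_zero_mem_capCent hI (hmin' hT'card) hbT' ?_ hxks (hT' x' hx') ?_
    · simpa using hgr.2.2.1 b a b k (Groupoid.inv k) xk hxk s hs
    · simpa [add_mul] using (hI s _ hxI).2

end PaperGrpd
end
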